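/- Let ω : ℤ₂ × ℤ₂ → ℤ₂ be defined on canonical representatives ā, b̄ ∈ {0,1} by ω(a,b) = 0 if ā + b̄ < 2 and ω(a,b) = 1 otherwise, and let α : ℤ₂ × ℤ₂ × ℤ₂ → ℂ* be α(a,b,c) = exp((πi/2)·ω(a,b)·c̄), with ω-values lifted to the integers 0 or 1. Then ∑_{g ∈ ℤ₂} α(g,0,g) · α(g,g,g) = 1 + i, where 0 is the identity of ℤ₂ and i is the imaginary unit in ℂ. -/

import Mathlib

/-- The `ℤ₂`-valued 2-cocycle on `ℤ₂` given by `ω(a,b) = 0` if `ā + b̄ < 2`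
and `ω(a,b) = 1` otherwise, where `ā ∈ {0,1}` is the canonical representative. -/
def omega2 (a b : ZMod 2) : ZMod 2 :=
  if a.val + b.val < 2 then 0 else 1

/-- The 3-cochain `α(a,b,c) = exp((πi/2)·ω(a,b)·c̄)`, with `ω(a,b)` lifted
to the integer `0` or `1`. -/
noncomputable def alpha2 (a b c : ZMod 2) : ℂ :=
  Complex.exp ((Real.pi * Complex.I / 2) * ((omega2 a b).val : ℂ) * (c.val : ℂ))

theorem ZMod.sum_univ_two {M : Type*} [AddCommMonoid M] (f : ZMod 2 → M) :
    ∑ g, f g = f 0 + f 1 :=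
  Fin.sum_univ_two f

theorem omega2_zero_right (a : ZMod 2) : omega2 a 0 = 0 := by
  simp [omega2, ZMod.val_lt a]

theorem omega2_one_one : omega2 1 1 = 1 := rfl

theorem alpha2_eq_I_pow (a b c : ZMod 2) :
    alpha2 a b c = Complex.I ^ ((omega2 a b).val * c.val) := by
  have h : Real.pi * Complex.I / 2 * ((omega2 a b).val : ℂ) * (c.val : ℂ) =
      (((omega2 a b).val * c.val : ℕ) : ℂ) * (Real.pi / 2 * Complex.I) := by
    push_cast
    ring
  rw [alpha2, h, Complex.exp_nat_mul, Complex.exp_pi_div_two_mul_I]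

/-- The state-sum invariant of the lens space `L(2,1)` with its second spin
structure `s₂` equals `1 + i`. -/
theorem Z_L21_s2 :
    ∑ g : ZMod 2, alpha2 g 0 g * alpha2 g g g = 1 + Complex.I := by
  rw [ZMod.sum_univ_two]
  simp only [alpha2_eq_I_pow, omega2_zero_right, omega2_one_one]
  simp [ZMod.val_one]
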